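/- arXiv:1005.5501 — 5 statements merged into one kernel-verified Lean document; each statement's English description precedes it below -/
import Mathlib

section
/- Chain rule for Fox derivatives: if φ : Fₙ → Fₙ is an endomorphism of the free group Fₙ, then for any w ∈ Fₙ and each j, ∂(φ(w))/∂γⱼ = Σₖ φ(∂w/∂γₖ) · (∂(φ(γₖ))/∂γⱼ), where φ also denotes the induced ring map on ℤ[Fₙ]. -/
/-!
Both sides of the chain rule, as functions of `w`, are crossed homomorphisms
`Fₙ → ℤ[Fₙ]` with respect to `w ↦ φ(w)`, and they agree on the basis. A crossed homomorphism
on a free group is determined by its values on a basis, since its values on `1`, on inverses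
and on products are forced by the cocycle identity. This is the fundamental formula of Fox
calculus `δ w = Σₖ (∂w/∂γₖ) • δ γₖ`, applied to `δ = ∂/∂γⱼ ∘ φ`.
-/

def IsCrossedHom {G S M : Type*} [Monoid G] [Monoid S] [Add M] [SMul S M]
    (ρ : G →* S) (δ : G → M) : Prop :=
  ∀ x y, δ (x * y) = δ x + ρ x • δ y

namespace IsCrossedHom

section Monoid

variable {G S M : Type*} [Monoid G] [Ring S] [AddCommGroup M] [Module S M]
  {ρ : G →* S} {δ : G → M}

theorem map_one (hδ : IsCrossedHom ρ δ) : δ 1 = 0 := by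
  simpa [ρ.map_one] using hδ 1 1

theorem comp {H : Type*} [Monoid H] (hδ : IsCrossedHom ρ δ) (ψ : H →* G) :
    IsCrossedHom (ρ.comp ψ) (δ ∘ ψ) := fun x y => by
  simp only [Function.comp_apply, ψ.map_mul, hδ _ _, MonoidHom.comp_apply]

theorem map {T : Type*} [Ring T] {δ : G → S} (hδ : IsCrossedHom ρ δ) (f : S →+* T) :
    IsCrossedHom ((f : S →* T).comp ρ) (f ∘ δ) := fun x y => by
  simp [hδ x y]

theorem smul_right {δ : G → S} (hδ : IsCrossedHom ρ δ) (m : M) :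
    IsCrossedHom ρ (fun x => δ x • m) := fun x y => by
  simp only [hδ x y, add_smul, smul_assoc]

theorem sum {ι : Type*} (s : Finset ι) {δ : ι → G → M} (hδ : ∀ i ∈ s, IsCrossedHom ρ (δ i)) :
    IsCrossedHom ρ (fun x => ∑ i ∈ s, δ i x) := fun x y => by
  simp only [Finset.smul_sum, ← Finset.sum_add_distrib]
  exact Finset.sum_congr rfl fun i hi => hδ i hi x y

end Monoid

variable {G S M : Type*} [Group G] [Ring S] [AddCommGroup M] [Module S M]
  {ρ : G →* S} {δ : G → M}

theorem map_inv (hδ : IsCrossedHom ρ δ) (x : G) : δ x⁻¹ = -(ρ x⁻¹ • δ x) := by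
  have h := hδ x⁻¹ x
  rw [inv_mul_cancel, hδ.map_one] at h
  exact eq_neg_of_add_eq_zero_left h.symm

theorem ext_freeGroup {α : Type*} {ρ : FreeGroup α →* S} {δ δ' : FreeGroup α → M}
    (hδ : IsCrossedHom ρ δ) (hδ' : IsCrossedHom ρ δ')
    (h : ∀ a, δ (FreeGroup.of a) = δ' (FreeGroup.of a)) : δ = δ' := by
  funext w
  induction w using FreeGroup.induction_on with
  | C1 => rw [hδ.map_one, hδ'.map_one]
  | of a => exact h a
  | inv_of a _ => rw [hδ.map_inv, hδ'.map_inv, h]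
  | mul x y hx hy => rw [hδ, hδ', hx, hy]

theorem eq_sum_foxDeriv_smul {ι R : Type*} [Fintype ι] [DecidableEq ι] [CommRing R]
    {d : ι → FreeGroup ι → MonoidAlgebra R (FreeGroup ι)}
    (hd : ∀ k, IsCrossedHom (MonoidAlgebra.of R (FreeGroup ι)) (d k))
    (hbasis : ∀ k i, d k (FreeGroup.of i) = if i = k then 1 else 0)
    (f : MonoidAlgebra R (FreeGroup ι) →+* S) {δ : FreeGroup ι → M}
    (hδ : IsCrossedHom ((f : _ →* S).comp (MonoidAlgebra.of R (FreeGroup ι))) δ) :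
    δ = fun w => ∑ k, f (d k w) • δ (FreeGroup.of k) := by
  refine hδ.ext_freeGroup
    (sum _ fun k _ => ((hd k).map f).smul_right (δ (FreeGroup.of k))) fun i => ?_
  simp [hbasis]

end IsCrossedHom

/-- Chain rule for Fox derivatives: for an endomorphism `φ` of the free group `Fₙ`,
`∂(φ(w))/∂γⱼ = Σₖ φ(∂w/∂γₖ) · ∂(φ(γₖ))/∂γⱼ`. -/
theorem fox_deriv_chain_rule (n : ℕ)
    (d : Fin n → FreeGroup (Fin n) → MonoidAlgebra ℤ (FreeGroup (Fin n)))
    (hcross : ∀ (j : Fin n) (x y : FreeGroup (Fin n)),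
      d j (x * y) = d j x + MonoidAlgebra.of ℤ (FreeGroup (Fin n)) x * d j y)
    (hbasis : ∀ j i : Fin n, d j (FreeGroup.of i) = if i = j then 1 else 0)
    (φ : FreeGroup (Fin n) →* FreeGroup (Fin n)) (w : FreeGroup (Fin n)) (j : Fin n) :
    d j (φ w) = ∑ k : Fin n,
      (MonoidAlgebra.mapDomainRingHom ℤ φ) (d k w) * d j (φ (FreeGroup.of k)) := by
  have hd : ∀ k, IsCrossedHom (MonoidAlgebra.of ℤ (FreeGroup (Fin n))) (d k) := hcross
  have hof : ((MonoidAlgebra.mapDomainRingHom ℤ φ : _ →* _).comp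
      (MonoidAlgebra.of ℤ (FreeGroup (Fin n)))) = (MonoidAlgebra.of ℤ _).comp φ := by
    ext x
    simp [MonoidAlgebra.of_apply]
  have hφ := (hd j).comp φ
  rw [← hof] at hφ
  exact congrFun (IsCrossedHom.eq_sum_foxDeriv_smul hd hbasis _ hφ) w
end

section
/- Let ρ : Fₙ → Γ be a group homomorphism. An element v ∈ Fₙ satisfies ρ(∂v/∂γⱼ) = 0 in ℤ[Γ] for all j = 1,…,n if and only if v lies in the commutator subgroup [Ker ρ, Ker ρ]. -/
/-!
Write `K = ker ρ`. On `K` the Fox rule reads `ρ(∂(xy)) = ρ(∂x) + ρ(∂y)`, so `v ↦ (ρ(∂v/∂γⱼ))ⱼ`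
is a homomorphism from `K` to an abelian group and kills `[K, K]`.

Conversely, the fundamental formula `∑ⱼ ρ(∂v/∂γⱼ) (ρ(γⱼ) - 1) = ρ(v) - 1` shows that `v ∈ K` when
all derivatives vanish. After replacing `Γ` by the image of `ρ`, a section `s` of `ρ` gives the
Schreier elements `s(g) x s(g ρ(x))⁻¹ ∈ K`, and extending `g ↦ [s(g) γⱼ s(g ρ(γⱼ))⁻¹] ∈ Kᵃᵇ`
linearly to `ℤ[Γ]` gives maps that recover the class of `v ∈ K` in `Kᵃᵇ` from its Fox derivatives.
Both the fundamental formula and this recovery are identities between cocycles of the free group,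
which are determined by their values on the basis.
-/

open MonoidAlgebra

theorem MonoidAlgebra.mapDomainRingHom_of {R M N : Type*} [Semiring R] [Monoid M] [Monoid N]
    (f : M →* N) (x : M) : mapDomainRingHom R f (of R M x) = single (f x) 1 := by
  simp [mapDomain_single]

theorem MonoidAlgebra.mapDomainRingHom_rangeRestrict_eq_zero_iff {R G Γ : Type*} [Semiring R]
    [Group G] [Group Γ] (ρ : G →* Γ) (x : R[G]) :
    mapDomainRingHom R ρ.rangeRestrict x = 0 ↔ mapDomainRingHom R ρ x = 0 := by
  have h : mapDomainRingHom R ρ =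
      (mapDomainRingHom R ρ.range.subtype).comp (mapDomainRingHom R ρ.rangeRestrict) := by
    rw [← mapDomainRingHom_comp, ρ.subtype_comp_rangeRestrict]
  rw [h, RingHom.comp_apply,
    map_eq_zero_iff (mapDomainRingHom R ρ.range.subtype) (mapDomain_injective Subtype.val_injective)]

theorem Subgroup.coe_mem_commutator_self_iff {G : Type*} [Group G] {H : Subgroup G} (x : H) :
    (x : G) ∈ ⁅H, H⁆ ↔ Abelianization.of x = 1 := by
  rw [← H.map_subtype_commutator, ← MonoidHom.mem_ker, Abelianization.ker_of]
  exact Subgroup.mem_map_iff_mem H.subtype_injective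

namespace Fox

section Cocycle

variable {G Γ A : Type*} [Group G] [Group Γ] [AddGroup A]

/-- A `1`-cocycle of `G` with values in the functions `Γ → A`, on which `G` acts by right
translation through `ρ`. -/
def IsCocycle (ρ : G →* Γ) (f : Γ → G → A) : Prop :=
  ∀ g x y, f g (x * y) = f g x + f (g * ρ x) y

namespace IsCocycle

variable {ρ : G →* Γ} {f : Γ → G → A}

theorem map_one (hf : IsCocycle ρ f) (g : Γ) : f g 1 = 0 := by
  simpa using hf g 1 1

theorem map_inv (hf : IsCocycle ρ f) (g : Γ) (x : G) : f g x⁻¹ = -f (g * ρ x⁻¹) x := by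
  have h := hf g x⁻¹ x
  rw [inv_mul_cancel, hf.map_one] at h
  exact eq_neg_of_add_eq_zero_left h.symm

theorem ext_freeGroup {α : Type*} {ρ : FreeGroup α →* Γ} {f₁ f₂ : Γ → FreeGroup α → A}
    (h₁ : IsCocycle ρ f₁) (h₂ : IsCocycle ρ f₂)
    (h : ∀ g i, f₁ g (FreeGroup.of i) = f₂ g (FreeGroup.of i)) : f₁ = f₂ := by
  funext g x
  induction x using FreeGroup.induction_on generalizing g with
  | C1 => rw [h₁.map_one, h₂.map_one]
  | of i => exact h g i
  | inv_of i ih => rw [h₁.map_inv, h₂.map_inv, ih]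
  | mul x y ihx ihy => rw [h₁, h₂, ihx, ihy]

end IsCocycle

end Cocycle

section FoxDerivative

variable {α Γ : Type*} [Fintype α] [Group Γ] (ρ : FreeGroup α →* Γ)
  {d : α → FreeGroup α → ℤ[FreeGroup α]}

theorem isCocycle_sum_foxDeriv {A : Type*} [AddCommGroup A]
    (hcross : ∀ j x y, d j (x * y) = d j x + of ℤ (FreeGroup α) x * d j y)
    (T : α → ℤ[Γ] →+ A) :
    IsCocycle ρ fun g v ↦ ∑ j, T j (single g 1 * mapDomainRingHom ℤ ρ (d j v)) := by
  intro g x y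
  rw [← Finset.sum_add_distrib]
  refine Finset.sum_congr rfl fun j _ ↦ ?_
  rw [hcross, map_add (mapDomainRingHom ℤ ρ), map_mul (mapDomainRingHom ℤ ρ), mapDomainRingHom_of,
    mul_add, map_add, ← mul_assoc, single_mul_single, mul_one]

theorem sum_foxDeriv_of [DecidableEq α] {A : Type*} [AddCommGroup A]
    (hbasis : ∀ j i, d j (FreeGroup.of i) = if i = j then 1 else 0)
    (T : α → ℤ[Γ] →+ A) (g : Γ) (i : α) :
    ∑ j, T j (single g 1 * mapDomainRingHom ℤ ρ (d j (FreeGroup.of i))) = T i (single g 1) := by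
  simp only [hbasis, apply_ite, map_one, map_zero, mul_one, mul_zero, Finset.sum_ite_eq,
    Finset.mem_univ, if_true]

theorem sum_foxDeriv_mul_sub_one [DecidableEq α]
    (hcross : ∀ j x y, d j (x * y) = d j x + of ℤ (FreeGroup α) x * d j y)
    (hbasis : ∀ j i, d j (FreeGroup.of i) = if i = j then 1 else 0) (v : FreeGroup α) :
    ∑ j, mapDomainRingHom ℤ ρ (d j v) * (single (ρ (FreeGroup.of j)) 1 - 1) =
      single (ρ v) 1 - 1 := by
  have hcocycle : IsCocycle ρ fun g v ↦ single (g * ρ v) (1 : ℤ) - single g 1 := by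
    intro g x y
    dsimp only
    rw [map_mul, mul_assoc]
    abel
  have h := IsCocycle.ext_freeGroup
    (isCocycle_sum_foxDeriv ρ hcross fun j ↦ .mulRight (single (ρ (.of j)) 1 - 1)) hcocycle
    fun g i ↦ by
      rw [sum_foxDeriv_of ρ hbasis, AddMonoidHom.mulRight_apply, mul_sub, single_mul_single,
        mul_one, mul_one]
  simpa [← one_def] using congr_fun (congr_fun h 1) v

theorem mem_ker_of_foxDeriv_eq_zero [DecidableEq α]
    (hcross : ∀ j x y, d j (x * y) = d j x + of ℤ (FreeGroup α) x * d j y)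
    (hbasis : ∀ j i, d j (FreeGroup.of i) = if i = j then 1 else 0) {v : FreeGroup α}
    (hv : ∀ j, mapDomainRingHom ℤ ρ (d j v) = 0) : v ∈ ρ.ker := by
  have h := sum_foxDeriv_mul_sub_one ρ hcross hbasis v
  simp only [hv, zero_mul, Finset.sum_const_zero] at h
  exact of_injective (sub_eq_zero.mp h.symm)

end FoxDerivative

section Schreier

variable {G Γ : Type*} [Group G] [Group Γ] {ρ : G →* Γ} {s : Γ → G}

def schreier (hs : Function.RightInverse s ρ) (g : Γ) (x : G) : ρ.ker :=
  ⟨s g * x * (s (g * ρ x))⁻¹, by simp [hs _]⟩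

theorem schreier_mul (hs : Function.RightInverse s ρ) (g : Γ) (x y : G) :
    schreier hs g (x * y) = schreier hs g x * schreier hs (g * ρ x) y := by
  ext
  simp only [schreier, map_mul, mul_assoc, Subgroup.coe_mul]
  group

theorem isCocycle_schreier (hs : Function.RightInverse s ρ) :
    IsCocycle ρ fun g x ↦ Additive.ofMul (Abelianization.of (schreier hs g x)) := by
  intro g x y
  dsimp only
  rw [schreier_mul, map_mul, ofMul_mul]

end Schreier

section SchreierLift

variable {α Γ : Type*} [Group Γ] {ρ : FreeGroup α →* Γ} {s : Γ → FreeGroup α}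

noncomputable def schreierLift (hs : Function.RightInverse s ρ) (j : α) :
    ℤ[Γ] →+ Additive (Abelianization ρ.ker) :=
  (Finsupp.liftAddHom fun g ↦ zmultiplesHom _
    (Additive.ofMul (Abelianization.of (schreier hs g (FreeGroup.of j))))).comp
    coeffAddEquiv.toAddMonoidHom

theorem schreierLift_single (hs : Function.RightInverse s ρ) (j : α) (g : Γ) (k : ℤ) :
    schreierLift hs j (single g k) =
      k • Additive.ofMul (Abelianization.of (schreier hs g (FreeGroup.of j))) :=
  Finsupp.liftAddHom_apply_single _ _ _

theorem schreier_eq_sum_schreierLift [Fintype α] [DecidableEq α]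
    {d : α → FreeGroup α → ℤ[FreeGroup α]}
    (hcross : ∀ j x y, d j (x * y) = d j x + of ℤ (FreeGroup α) x * d j y)
    (hbasis : ∀ j i, d j (FreeGroup.of i) = if i = j then 1 else 0)
    (hs : Function.RightInverse s ρ) (g : Γ) (v : FreeGroup α) :
    Additive.ofMul (Abelianization.of (schreier hs g v)) =
      ∑ j, schreierLift hs j (single g 1 * mapDomainRingHom ℤ ρ (d j v)) := by
  have h := IsCocycle.ext_freeGroup (isCocycle_schreier hs)
    (isCocycle_sum_foxDeriv ρ hcross (schreierLift hs)) fun g i ↦ by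
      rw [sum_foxDeriv_of ρ hbasis, schreierLift_single, one_smul]
  exact congr_fun (congr_fun h g) v

end SchreierLift

section KernelCommutator

variable {α Γ : Type*} [Group Γ] {ρ : FreeGroup α →* Γ} {d : α → FreeGroup α → ℤ[FreeGroup α]}

noncomputable def foxDerivKerHom
    (hcross : ∀ j x y, d j (x * y) = d j x + of ℤ (FreeGroup α) x * d j y) (j : α) :
    ρ.ker →* Multiplicative ℤ[Γ] :=
  MonoidHom.mk' (fun x ↦ Multiplicative.ofAdd (mapDomainRingHom ℤ ρ (d j x))) fun x y ↦ by
    rw [Subgroup.coe_mul, hcross, map_add, map_mul, mapDomainRingHom_of, ρ.mem_ker.mp x.2,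
      ← one_def, one_mul, ofAdd_add]

theorem foxDeriv_eq_zero_of_mem_commutator_ker
    (hcross : ∀ j x y, d j (x * y) = d j x + of ℤ (FreeGroup α) x * d j y)
    {v : FreeGroup α} (hv : v ∈ ⁅ρ.ker, ρ.ker⁆) (j : α) :
    mapDomainRingHom ℤ ρ (d j v) = 0 := by
  lift v to ρ.ker using Subgroup.commutator_le_self _ hv
  rw [Subgroup.coe_mem_commutator_self_iff] at hv
  simpa [foxDerivKerHom] using congr_arg (Abelianization.lift (foxDerivKerHom hcross j)) hv

theorem mem_commutator_ker_of_foxDeriv_eq_zero_of_surjective [Fintype α] [DecidableEq α]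
    (hcross : ∀ j x y, d j (x * y) = d j x + of ℤ (FreeGroup α) x * d j y)
    (hbasis : ∀ j i, d j (FreeGroup.of i) = if i = j then 1 else 0)
    (hρ : Function.Surjective ρ) {v : FreeGroup α}
    (hv : ∀ j, mapDomainRingHom ℤ ρ (d j v) = 0) : v ∈ ⁅ρ.ker, ρ.ker⁆ := by
  have hs := Function.rightInverse_surjInv hρ
  have hker : ρ v = 1 := mem_ker_of_foxDeriv_eq_zero ρ hcross hbasis hv
  have hconj : (schreier hs 1 v : FreeGroup α) ∈ ⁅ρ.ker, ρ.ker⁆ := by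
    rw [Subgroup.coe_mem_commutator_self_iff, ← ofMul_eq_zero,
      schreier_eq_sum_schreierLift hcross hbasis hs]
    simp [hv]
  simp only [schreier, hker, mul_one] at hconj
  simpa [mul_assoc] using Subgroup.Normal.conj_mem' inferInstance _ hconj (Function.surjInv hρ 1)

end KernelCommutator

end Fox

/-- For a homomorphism `ρ : Fₙ → Γ`, an element `v ∈ Fₙ` has all its Fox derivatives
killed by (the ring map induced by) `ρ` if and only if `v ∈ [Ker ρ, Ker ρ]`. -/
theorem fox_deriv_vanish_iff_mem_commutator_ker (n : ℕ)
    (d : Fin n → FreeGroup (Fin n) → MonoidAlgebra ℤ (FreeGroup (Fin n)))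
    (hcross : ∀ (j : Fin n) (x y : FreeGroup (Fin n)),
      d j (x * y) = d j x + MonoidAlgebra.of ℤ (FreeGroup (Fin n)) x * d j y)
    (hbasis : ∀ j i : Fin n, d j (FreeGroup.of i) = if i = j then 1 else 0)
    (Γ : Type*) [Group Γ] (ρ : FreeGroup (Fin n) →* Γ) (v : FreeGroup (Fin n)) :
    (∀ j : Fin n, (MonoidAlgebra.mapDomainRingHom ℤ ρ) (d j v) = 0) ↔
      v ∈ ⁅ρ.ker, ρ.ker⁆ := by
  refine ⟨fun hv ↦ ?_, fun hv j ↦ Fox.foxDeriv_eq_zero_of_mem_commutator_ker hcross hv j⟩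
  rw [← ρ.ker_rangeRestrict]
  refine Fox.mem_commutator_ker_of_foxDeriv_eq_zero_of_surjective hcross hbasis
    ρ.rangeRestrict_surjective fun j ↦ ?_
  rw [mapDomainRingHom_rangeRestrict_eq_zero_iff]
  exact hv j
end

section
/- The Magnus representation of a free group is injective: the map w ↦ [[w, Σⱼ (∂w/∂γⱼ)sⱼ],[0,1]] from Fₙ into 2×2 upper-triangular matrices over the polynomial ring (ℤ[Fₙ])[s₁,…,sₙ] is an injective group homomorphism. -/
open MonoidAlgebra

/-- The polynomial ring `(ℤ[Fₙ])[s₁,…,sₙ]` in `n` commuting indeterminates over the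
(noncommutative) group ring `ℤ[Fₙ]`, realized as the monoid algebra of `Fin n →₀ ℕ`. -/
abbrev MagnusPolyRing (n : ℕ) : Type :=
  AddMonoidAlgebra (MonoidAlgebra ℤ (FreeGroup (Fin n))) (Fin n →₀ ℕ)

/-- The indeterminate `sⱼ`. -/
noncomputable def magnusS (n : ℕ) (j : Fin n) : MagnusPolyRing n :=
  AddMonoidAlgebra.of' (MonoidAlgebra ℤ (FreeGroup (Fin n))) (Fin n →₀ ℕ) (Finsupp.single j 1)

/-- The Magnus representation of the free group `Fₙ`: `w ↦ [[w, Σⱼ (∂w/∂γⱼ)sⱼ],[0,1]]`. -/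
noncomputable def magnusMapFree (n : ℕ)
    (d : Fin n → FreeGroup (Fin n) → MonoidAlgebra ℤ (FreeGroup (Fin n)))
    (w : FreeGroup (Fin n)) : Matrix (Fin 2) (Fin 2) (MagnusPolyRing n) :=
  !![AddMonoidAlgebra.singleZeroRingHom (MonoidAlgebra.of ℤ (FreeGroup (Fin n)) w),
      ∑ j : Fin n, AddMonoidAlgebra.singleZeroRingHom (d j w) * magnusS n j;
    0, 1]

theorem AddMonoidAlgebra.singleZeroRingHom_injective {R M : Type*} [Semiring R] [AddMonoid M] :
    Function.Injective (AddMonoidAlgebra.singleZeroRingHom : R →+* AddMonoidAlgebra R M) :=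
  fun _ _ h => AddMonoidAlgebra.single_right_inj.mp h

theorem Matrix.unitriangular_fin_two_mul {R : Type*} [Semiring R] (a b a' b' : R) :
    !![a, b; 0, 1] * !![a', b'; 0, 1] = !![a * a', a * b' + b; 0, 1] := by
  simp

theorem sum_map_mul_of_crossed {ι G A B : Type*} [Mul G] [Semiring A] [Semiring B]
    (φ : A →+* B) (ρ : G → A) (d : ι → G → A)
    (hcross : ∀ j x y, d j (x * y) = d j x + ρ x * d j y) (s : ι → B) (t : Finset ι) (x y : G) :
    ∑ j ∈ t, φ (d j (x * y)) * s j =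
      φ (ρ x) * ∑ j ∈ t, φ (d j y) * s j + ∑ j ∈ t, φ (d j x) * s j := by
  simp only [hcross, map_add, map_mul, add_mul, Finset.sum_add_distrib, Finset.mul_sum, mul_assoc]
  rw [add_comm]

theorem magnusMapFree_apply_zero_zero (n : ℕ)
    (d : Fin n → FreeGroup (Fin n) → MonoidAlgebra ℤ (FreeGroup (Fin n))) (w : FreeGroup (Fin n)) :
    magnusMapFree n d w 0 0 =
      AddMonoidAlgebra.singleZeroRingHom (MonoidAlgebra.of ℤ (FreeGroup (Fin n)) w) :=
  rfl

theorem magnus_rep_free_injective_general (n : ℕ)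
    (d : Fin n → FreeGroup (Fin n) → MonoidAlgebra ℤ (FreeGroup (Fin n)))
    (hcross : ∀ (j : Fin n) (x y : FreeGroup (Fin n)),
      d j (x * y) = d j x + MonoidAlgebra.of ℤ (FreeGroup (Fin n)) x * d j y) :
    (∀ x y : FreeGroup (Fin n),
      magnusMapFree n d (x * y) = magnusMapFree n d x * magnusMapFree n d y) ∧
    Function.Injective (magnusMapFree n d) := by
  refine ⟨fun x y => ?_, fun x y h => ?_⟩
  · rw [magnusMapFree, magnusMapFree, magnusMapFree, Matrix.unitriangular_fin_two_mul,
      sum_map_mul_of_crossed _ _ d hcross, map_mul, map_mul]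
  · have h00 : magnusMapFree n d x 0 0 = magnusMapFree n d y 0 0 := by rw [h]
    rw [magnusMapFree_apply_zero_zero, magnusMapFree_apply_zero_zero] at h00
    exact MonoidAlgebra.of_injective (AddMonoidAlgebra.singleZeroRingHom_injective h00)

/-- The Magnus representation of a free group is an injective group homomorphism. -/
theorem magnus_rep_free_injective (n : ℕ)
    (d : Fin n → FreeGroup (Fin n) → MonoidAlgebra ℤ (FreeGroup (Fin n)))
    (hcross : ∀ (j : Fin n) (x y : FreeGroup (Fin n)),
      d j (x * y) = d j x + MonoidAlgebra.of ℤ (FreeGroup (Fin n)) x * d j y)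
    (hbasis : ∀ j i : Fin n, d j (FreeGroup.of i) = if i = j then 1 else 0) :
    (∀ x y : FreeGroup (Fin n),
      magnusMapFree n d (x * y) = magnusMapFree n d x * magnusMapFree n d y) ∧
    Function.Injective (magnusMapFree n d) :=
  magnus_rep_free_injective_general n d hcross
end

section
/- For the homomorphism w ↦ ρ(Magnus matrix of w) obtained from the Magnus representation of Fₙ composed with a homomorphism ρ : Fₙ → Γ, the kernel equals [Ker ρ, Ker ρ]. In particular, taking ρ the abelianization map, the metabelian quotient Fₙ/[[Fₙ,Fₙ],[Fₙ,Fₙ]] embeds into GL(2, (ℤ[H₁(Fₙ)])[s₁,…,sₙ]). -/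
/-- The polynomial ring `(ℤ[Γ])[s₁,…,sₙ]` in `n` commuting indeterminates. -/
abbrev MagnusPolyRing' (n : ℕ) (Γ : Type*) [Group Γ] : Type _ :=
  AddMonoidAlgebra (MonoidAlgebra ℤ Γ) (Fin n →₀ ℕ)

/-- The Magnus representation of `Fₙ` reduced by `ρ : Fₙ → Γ`:
`w ↦ [[ρ(w), Σⱼ ρ(∂w/∂γⱼ)sⱼ],[0,1]]` over `(ℤ[Γ])[S]`. -/
noncomputable def magnusMapRho (n : ℕ) (Γ : Type*) [Group Γ]
    (ρ : FreeGroup (Fin n) →* Γ)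
    (d : Fin n → FreeGroup (Fin n) → MonoidAlgebra ℤ (FreeGroup (Fin n)))
    (w : FreeGroup (Fin n)) : Matrix (Fin 2) (Fin 2) (MagnusPolyRing' n Γ) :=
  !![AddMonoidAlgebra.singleZeroRingHom (MonoidAlgebra.of ℤ Γ (ρ w)),
      ∑ j : Fin n, AddMonoidAlgebra.singleZeroRingHom
        ((MonoidAlgebra.mapDomainRingHom ℤ ρ) (d j w)) *
        AddMonoidAlgebra.of' (MonoidAlgebra ℤ Γ) (Fin n →₀ ℕ) (Finsupp.single j 1);
    0, 1]

/-!
The Magnus map is multiplicative, because the cocycle rule for the Fox derivatives is exactly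
the `(1,2)`-entry of a product of upper triangular matrices, and it sends `ker ρ` to unipotent
matrices, which commute; hence it kills `[ker ρ, ker ρ]`.

Conversely, if `w` is in the kernel then `ρ w = 1` and every `ρ(∂w/∂γⱼ)` vanishes, so the
fundamental formula `w - 1 = Σⱼ (∂w/∂γⱼ)(γⱼ - 1)` puts `w - 1` in `(ker ρ̄)·I`, where
`ρ̄ : ℤ[Fₙ] → ℤ[Γ]` and `I` is the augmentation ideal. Fix a representative `t(g)` of each coset
`g ker ρ`. The additive map `ℤ[Fₙ] → (ker ρ)ᵃᵇ`, `g ↦ [g t(g)⁻¹]` kills `(ker ρ̄)·I` and sends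
`w - 1` to the class of `w`, so `w ∈ [ker ρ, ker ρ]`.
-/

section Crossed

variable {M R : Type*} [Monoid M] [Ring R]

theorem crossed_one_eq_zero (χ : M →* R) {D : M → R}
    (hD : ∀ x y, D (x * y) = D x + χ x * D y) : D 1 = 0 := by
  simpa using hD 1 1

theorem FreeGroup.crossed_eq_zero_of_of {α : Type*} (χ : FreeGroup α →* R) {D : FreeGroup α → R}
    (hD : ∀ x y, D (x * y) = D x + χ x * D y) (hof : ∀ i, D (FreeGroup.of i) = 0)
    (w : FreeGroup α) : D w = 0 := by
  induction w using FreeGroup.induction_on with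
  | C1 => exact crossed_one_eq_zero χ hD
  | of i => exact hof i
  | inv_of i hi =>
    have h := hD (FreeGroup.of i)⁻¹ (FreeGroup.of i)
    rwa [inv_mul_cancel, crossed_one_eq_zero χ hD, hi, mul_zero, add_zero, eq_comm] at h
  | mul x y hx hy => rw [hD, hx, hy, mul_zero, add_zero]

end Crossed

def IsFoxDerivative {G k : Type*} [Group G] [CommRing k] (D : G → MonoidAlgebra k G) : Prop :=
  ∀ x y, D (x * y) = D x + MonoidAlgebra.of k G x * D y

theorem FreeGroup.fox_fundamental_formula {α k : Type*} [Fintype α] [DecidableEq α] [CommRing k]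
    {d : α → FreeGroup α → MonoidAlgebra k (FreeGroup α)} (hd : ∀ j, IsFoxDerivative (d j))
    (hbasis : ∀ j i, d j (FreeGroup.of i) = if i = j then 1 else 0) (w : FreeGroup α) :
    MonoidAlgebra.of k _ w - 1 = ∑ j, d j w * (MonoidAlgebra.of k _ (FreeGroup.of j) - 1) := by
  rw [← sub_eq_zero]
  refine FreeGroup.crossed_eq_zero_of_of (MonoidAlgebra.of k _) (D := fun w =>
      MonoidAlgebra.of k _ w - 1 - ∑ j, d j w * (MonoidAlgebra.of k _ (FreeGroup.of j) - 1))
    (fun x y => ?_) (fun i => ?_) w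
  · simp only [hd _ x y, add_mul, Finset.sum_add_distrib, mul_assoc, ← Finset.mul_sum]
    rw [_root_.map_mul]
    noncomm_ring
  · simp [hbasis]

namespace MonoidHom

variable {G Γ : Type*} [Group G] [Group Γ] (ρ : G →* Γ)

theorem mul_inv_invFun_mem_ker (x : G) : x * (Function.invFun ρ (ρ x))⁻¹ ∈ ρ.ker := by
  rw [mem_ker, map_mul, map_inv, Function.invFun_eq (f := ρ) ⟨x, rfl⟩, mul_inv_cancel]

/-- `Function.invFun ρ (ρ x)` is a fixed representative of the coset `x ker ρ`. -/
noncomputable def kerAbCoord (x : G) : Additive (Abelianization ρ.ker) :=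
  .ofMul (.of ⟨_, ρ.mul_inv_invFun_mem_ker x⟩)

theorem kerAbCoord_mul_of_mem_ker {n : G} (hn : n ∈ ρ.ker) (x : G) :
    ρ.kerAbCoord (n * x) = .ofMul (.of ⟨n, hn⟩) + ρ.kerAbCoord x := by
  have hρ : ρ (n * x) = ρ x := by rw [map_mul, mem_ker.mp hn, one_mul]
  rw [kerAbCoord, kerAbCoord, ← ofMul_mul, ← map_mul]
  congr 3
  simp only [hρ, mul_assoc]

noncomputable def kerAbLift : MonoidAlgebra ℤ G →+ Additive (Abelianization ρ.ker) :=
  (Finsupp.liftAddHom fun x => zmultiplesHom _ (ρ.kerAbCoord x)).comp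
    MonoidAlgebra.coeffAddEquiv.toAddMonoidHom

@[simp]
theorem kerAbLift_single (x : G) (m : ℤ) :
    ρ.kerAbLift (MonoidAlgebra.single x m) = m • ρ.kerAbCoord x := by
  simp [kerAbLift]

theorem kerAbLift_mul_of_sub_one {a : MonoidAlgebra ℤ G}
    (ha : MonoidAlgebra.mapDomainRingHom ℤ ρ a = 0) (x : G) :
    ρ.kerAbLift (a * (MonoidAlgebra.of ℤ G x - 1)) = 0 := by
  set s := Function.invFun ρ
  -- `a ↦ kerAbLift (a * (x - 1))` factors through `ρ̄`: on `y` it only depends on `y ker ρ`.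
  let ψ : MonoidAlgebra ℤ Γ →+ Additive (Abelianization ρ.ker) :=
    (Finsupp.liftAddHom fun γ =>
      zmultiplesHom _ (ρ.kerAbCoord (s γ * x) - ρ.kerAbCoord (s γ))).comp
      MonoidAlgebra.coeffAddEquiv.toAddMonoidHom
  have hfactor : ρ.kerAbLift.comp (AddMonoidHom.mulRight (MonoidAlgebra.of ℤ G x - 1)) =
      ψ.comp (MonoidAlgebra.mapDomainRingHom ℤ ρ).toAddMonoidHom := by
    refine MonoidAlgebra.addMonoidHom_ext fun y m => ?_
    have hy : ∀ z, ρ.kerAbCoord (y * z) =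
        .ofMul (.of ⟨_, ρ.mul_inv_invFun_mem_ker y⟩) + ρ.kerAbCoord (s (ρ y) * z) := fun z => by
      rw [← kerAbCoord_mul_of_mem_ker, ← mul_assoc, inv_mul_cancel_right]
    have hy₁ := hy 1
    rw [mul_one, mul_one] at hy₁
    simp [ψ, MonoidAlgebra.of_apply, mul_sub, hy x, hy₁, smul_sub]
  simpa [ha] using DFunLike.congr_fun hfactor a

theorem mem_commutator_ker_of_of_sub_one_eq_sum {ι : Type*} [Fintype ι] {w : G}
    (hwN : w ∈ ρ.ker) (a : ι → MonoidAlgebra ℤ G) (x : ι → G)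
    (ha : ∀ j, MonoidAlgebra.mapDomainRingHom ℤ ρ (a j) = 0)
    (hw : MonoidAlgebra.of ℤ G w - 1 = ∑ j, a j * (MonoidAlgebra.of ℤ G (x j) - 1)) :
    w ∈ ⁅ρ.ker, ρ.ker⁆ := by
  have hlift : ρ.kerAbLift (MonoidAlgebra.of ℤ G w - 1) = .ofMul (.of ⟨w, hwN⟩) := by
    have h := ρ.kerAbCoord_mul_of_mem_ker hwN 1
    rw [mul_one] at h
    rw [map_sub, MonoidAlgebra.of_apply, MonoidAlgebra.one_def, kerAbLift_single,
      kerAbLift_single, h]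
    simp
  have hzero : ρ.kerAbLift (MonoidAlgebra.of ℤ G w - 1) = 0 := by
    rw [hw, map_sum]
    exact Finset.sum_eq_zero fun j _ => ρ.kerAbLift_mul_of_sub_one (ha j) (x j)
  rw [hzero, eq_comm, ofMul_eq_zero, ← mem_ker, Abelianization.ker_of] at hlift
  rw [← Subgroup.map_subtype_commutator]
  exact ⟨_, hlift, rfl⟩

end MonoidHom

theorem Matrix.fin_two_upper_eq_one_iff {R : Type*} [Semiring R] {a b : R} :
    !![a, b; 0, 1] = 1 ↔ a = 1 ∧ b = 0 := by
  simp [← Matrix.ext_iff, Fin.forall_fin_two]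

theorem AddMonoidAlgebra.sum_singleZero_mul_of'_eq_zero_iff {R ι : Type*} [Semiring R]
    [Fintype ι] (c : ι → R) :
    ∑ j, singleZeroRingHom (c j) * of' R (ι →₀ ℕ) (Finsupp.single j 1) = 0 ↔ ∀ j, c j = 0 := by
  have hterm : ∀ j, singleZeroRingHom (c j) * of' R (ι →₀ ℕ) (Finsupp.single j 1) =
      single (Finsupp.single j 1) (c j) := fun j => by
    simp [of'_apply, singleZeroRingHom, single_mul_single]
  simp only [hterm]
  refine ⟨fun h i => ?_, fun h => by simp [h]⟩
  have hi := congrArg (fun f => f.coeff (Finsupp.single i 1)) h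
  simp only [coeff_sum, coeff_single, Finsupp.finsetSum_apply, Finsupp.single_apply, coeff_zero,
    Finsupp.coe_zero, Pi.zero_apply] at hi
  rwa [Finset.sum_eq_single i
    (fun j _ hj => if_neg ((Finsupp.single_left_injective one_ne_zero).ne hj)) (by simp),
    if_pos rfl] at hi

section Magnus

variable {n : ℕ} {Γ : Type*} [Group Γ] (ρ : FreeGroup (Fin n) →* Γ)
  {d : Fin n → FreeGroup (Fin n) → MonoidAlgebra ℤ (FreeGroup (Fin n))}

theorem magnusMapRho_eq_one_iff (w : FreeGroup (Fin n)) :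
    magnusMapRho n Γ ρ d w = 1 ↔
      ρ w = 1 ∧ ∀ j, MonoidAlgebra.mapDomainRingHom ℤ ρ (d j w) = 0 := by
  rw [magnusMapRho, Matrix.fin_two_upper_eq_one_iff,
    AddMonoidAlgebra.sum_singleZero_mul_of'_eq_zero_iff]
  simp [AddMonoidAlgebra.one_def, MonoidAlgebra.one_def, MonoidAlgebra.single_left_inj]

theorem magnusMapRho_mul (hd : ∀ j, IsFoxDerivative (d j)) (x y : FreeGroup (Fin n)) :
    magnusMapRho n Γ ρ d (x * y) = magnusMapRho n Γ ρ d x * magnusMapRho n Γ ρ d y := by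
  simp only [magnusMapRho, Matrix.mul_fin_two, hd _ x y, map_add, _root_.map_mul, add_mul,
    mul_assoc, Finset.sum_add_distrib, ← Finset.mul_sum, mul_zero, zero_mul, add_zero, zero_add,
    mul_one, MonoidAlgebra.mapDomainRingHom_apply, MonoidAlgebra.of_apply,
    MonoidAlgebra.mapDomain_single]
  rw [add_comm]

noncomputable def magnusHom (hd : ∀ j, IsFoxDerivative (d j)) :
    FreeGroup (Fin n) →* Matrix.GeneralLinearGroup (Fin 2) (MagnusPolyRing' n Γ) :=
  MonoidHom.toHomUnits
    { toFun := magnusMapRho n Γ ρ d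
      map_one' := by
        rw [magnusMapRho_eq_one_iff]
        exact ⟨map_one ρ, fun j => by rw [crossed_one_eq_zero _ (hd j), map_zero]⟩
      map_mul' := magnusMapRho_mul ρ hd }

@[simp]
theorem coe_magnusHom (hd : ∀ j, IsFoxDerivative (d j)) (w : FreeGroup (Fin n)) :
    (magnusHom ρ hd w : Matrix (Fin 2) (Fin 2) (MagnusPolyRing' n Γ)) = magnusMapRho n Γ ρ d w :=
  rfl

theorem magnusMapRho_eq_iff (hd : ∀ j, IsFoxDerivative (d j)) (x y : FreeGroup (Fin n)) :
    magnusMapRho n Γ ρ d x = magnusMapRho n Γ ρ d y ↔ magnusMapRho n Γ ρ d (x⁻¹ * y) = 1 := by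
  simp only [← coe_magnusHom ρ hd, Units.val_inj, Units.val_eq_one, map_mul, map_inv,
    inv_mul_eq_one]

theorem commute_magnusMapRho_of_mem_ker {x y : FreeGroup (Fin n)} (hx : x ∈ ρ.ker)
    (hy : y ∈ ρ.ker) : Commute (magnusMapRho n Γ ρ d x) (magnusMapRho n Γ ρ d y) := by
  rw [MonoidHom.mem_ker] at hx hy
  simp only [Commute, SemiconjBy, magnusMapRho, hx, hy, map_one, Matrix.mul_fin_two]
  simp [add_comm]

theorem commutator_ker_le_ker_magnusHom (hd : ∀ j, IsFoxDerivative (d j)) :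
    ⁅ρ.ker, ρ.ker⁆ ≤ (magnusHom ρ hd).ker := by
  refine Subgroup.commutator_le.mpr fun x hx y hy => ?_
  rw [MonoidHom.mem_ker, map_commutatorElement, commutatorElement_eq_one_iff_commute]
  exact Units.ext (commute_magnusMapRho_of_mem_ker ρ hx hy)

theorem magnusMapRho_eq_one_iff_mem_commutator (hd : ∀ j, IsFoxDerivative (d j))
    (hbasis : ∀ j i : Fin n, d j (FreeGroup.of i) = if i = j then 1 else 0)
    (w : FreeGroup (Fin n)) :
    magnusMapRho n Γ ρ d w = 1 ↔ w ∈ ⁅ρ.ker, ρ.ker⁆ := by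
  refine ⟨fun h => ?_, fun h => ?_⟩
  · obtain ⟨hw, hdw⟩ := (magnusMapRho_eq_one_iff ρ w).mp h
    exact ρ.mem_commutator_ker_of_of_sub_one_eq_sum hw (fun j => d j w) FreeGroup.of hdw
      (FreeGroup.fox_fundamental_formula hd hbasis w)
  · rw [← coe_magnusHom ρ hd, Units.val_eq_one, ← MonoidHom.mem_ker]
    exact commutator_ker_le_ker_magnusHom ρ hd h

end Magnus

/-- The kernel of the reduced Magnus representation is `[Ker ρ, Ker ρ]`; in particular,
taking `ρ` the abelianization map, the metabelian quotient
`Fₙ/[[Fₙ,Fₙ],[Fₙ,Fₙ]]` embeds into `GL(2,(ℤ[H₁(Fₙ)])[S])`. -/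
theorem magnus_rep_rho_kernel (n : ℕ)
    (d : Fin n → FreeGroup (Fin n) → MonoidAlgebra ℤ (FreeGroup (Fin n)))
    (hcross : ∀ (j : Fin n) (x y : FreeGroup (Fin n)),
      d j (x * y) = d j x + MonoidAlgebra.of ℤ (FreeGroup (Fin n)) x * d j y)
    (hbasis : ∀ j i : Fin n, d j (FreeGroup.of i) = if i = j then 1 else 0) :
    (∀ (Γ : Type) [Group Γ] (ρ : FreeGroup (Fin n) →* Γ) (w : FreeGroup (Fin n)),
      magnusMapRho n Γ ρ d w = 1 ↔ w ∈ ⁅ρ.ker, ρ.ker⁆) ∧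
    (∀ x y : FreeGroup (Fin n),
      magnusMapRho n (Abelianization (FreeGroup (Fin n))) Abelianization.of d x =
        magnusMapRho n (Abelianization (FreeGroup (Fin n))) Abelianization.of d y ↔
      x⁻¹ * y ∈ ⁅commutator (FreeGroup (Fin n)), commutator (FreeGroup (Fin n))⁆) := by
  refine ⟨fun Γ _ ρ w => magnusMapRho_eq_one_iff_mem_commutator ρ hcross hbasis w, fun x y => ?_⟩
  rw [← Abelianization.ker_of, ← magnusMapRho_eq_one_iff_mem_commutator _ hcross hbasis]
  exact magnusMapRho_eq_iff _ hcross x y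
end

section
/- The augmentation ideal I(Fₙ) of the group ring ℤ[Fₙ] of a free group of rank n is a free right ℤ[Fₙ]-module with basis {γ₁⁻¹ − 1, γ₂⁻¹ − 1, …, γₙ⁻¹ − 1}. -/
/-!
The Fox derivatives `∂ᵢ` are the `ℤ`-linear maps `ℤ[Fₙ] → ℤ[Fₙ]` determined on group elements by
`∂ᵢ(g h) = ∂ᵢ(g) h + ∂ᵢ(h)` and `∂ᵢ(γⱼ⁻¹) = δᵢⱼ`. They exist because `g ↦ (∂ᵢ g, g)` may be defined
on generators as a homomorphism into the semidirect product `ℤ[Fₙ] ⋊ Fₙ`. They satisfy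
`∂ᵢ((γⱼ⁻¹ − 1) a) = δᵢⱼ a`, so `(∂₁, …, ∂ₙ)` is a left inverse of `(aᵢ) ↦ Σᵢ (γᵢ⁻¹ − 1) aᵢ`, and the
fundamental formula `Σᵢ (γᵢ⁻¹ − 1) ∂ᵢ(x) = x − 𝔱(x)` shows that every `x` with `𝔱(x) = 0` lies in
its range.
-/

open MonoidAlgebra

section Augmentation

variable (k G : Type*) [CommSemiring k] [Monoid G]

noncomputable def MonoidAlgebra.augmentation : MonoidAlgebra k G →ₐ[k] k :=
  MonoidAlgebra.lift k k G 1

variable {k G}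

theorem MonoidAlgebra.augmentation_apply (x : MonoidAlgebra k G) :
    augmentation k G x = x.coeff.sum fun _ a => a := by
  simp [augmentation, MonoidAlgebra.lift_apply]

@[simp]
theorem MonoidAlgebra.augmentation_of (g : G) : augmentation k G (of k G g) = 1 :=
  MonoidAlgebra.lift_of _ g

end Augmentation

theorem MonoidAlgebra.augmentation_of_sub_one_mul {k G : Type*} [CommRing k] [Monoid G] (g : G)
    (a : MonoidAlgebra k G) : augmentation k G ((of k G g - 1) * a) = 0 := by
  rw [map_mul, map_sub, augmentation_of, map_one, sub_self, zero_mul]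

/-- The semidirect product `k[G] ⋊ G` for the action of `G` on `k[G]` by right multiplication:
a map `g ↦ (D g, g)` is a monoid hom exactly when `D (g * h) = D g * h + D h`. -/
@[ext]
structure RightSemidirect (k G : Type*) [Ring k] [Group G] where
  d : MonoidAlgebra k G
  g : G

namespace RightSemidirect

variable {k G : Type*} [Ring k] [Group G]

noncomputable instance : Group (RightSemidirect k G) where
  mul x y := ⟨x.d * of k G y.g + y.d, x.g * y.g⟩
  one := ⟨0, 1⟩
  inv x := ⟨-(x.d * of k G x.g⁻¹), x.g⁻¹⟩
  mul_assoc x y z := by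
    refine RightSemidirect.ext ?_ ?_
    · change (x.d * _ + y.d) * _ + z.d = x.d * of k G (y.g * z.g) + (y.d * _ + z.d)
      rw [map_mul]
      noncomm_ring
    · exact mul_assoc _ _ _
  one_mul x := by
    refine RightSemidirect.ext ?_ ?_
    · change 0 * _ + x.d = x.d
      rw [zero_mul, zero_add]
    · exact one_mul _
  mul_one x := by
    refine RightSemidirect.ext ?_ ?_
    · change x.d * of k G 1 + 0 = x.d
      rw [map_one, mul_one, add_zero]
    · exact mul_one _
  inv_mul_cancel x := by
    refine RightSemidirect.ext ?_ ?_
    · change -(x.d * _) * _ + x.d = 0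
      rw [neg_mul, mul_assoc, ← map_mul, inv_mul_cancel, map_one, mul_one, neg_add_cancel]
    · exact inv_mul_cancel _

@[simp]
theorem mul_d (x y : RightSemidirect k G) : (x * y).d = x.d * of k G y.g + y.d := rfl

@[simp]
theorem mul_g (x y : RightSemidirect k G) : (x * y).g = x.g * y.g := rfl

@[simp]
theorem one_d : (1 : RightSemidirect k G).d = 0 := rfl

@[simp]
theorem one_g : (1 : RightSemidirect k G).g = 1 := rfl

def rightHom : RightSemidirect k G →* G where
  toFun := g
  map_one' := rfl
  map_mul' _ _ := rfl

end RightSemidirect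

section Fox

variable (k : Type*) [CommRing k] {α : Type*} [DecidableEq α]

/-- The value `-γᵢ` at `γᵢ` is forced by `∂ᵢ(γᵢ⁻¹) = 1`. -/
noncomputable def foxCocycle (i : α) : FreeGroup α →* RightSemidirect k (FreeGroup α) :=
  FreeGroup.lift fun j => ⟨if j = i then -of k _ (FreeGroup.of j) else 0, FreeGroup.of j⟩

noncomputable def foxDeriv (i : α) :
    MonoidAlgebra k (FreeGroup α) →ₗ[k] MonoidAlgebra k (FreeGroup α) :=
  (MonoidAlgebra.basis (FreeGroup α) k).constr k fun g => (foxCocycle k i g).d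

variable {k}

@[simp]
theorem foxCocycle_g (i : α) (g : FreeGroup α) : (foxCocycle k i g).g = g := by
  suffices RightSemidirect.rightHom.comp (foxCocycle k i) = MonoidHom.id _ from
    DFunLike.congr_fun this g
  refine FreeGroup.ext_hom _ _ fun j => ?_
  change (foxCocycle k i (FreeGroup.of j)).g = FreeGroup.of j
  rw [foxCocycle, FreeGroup.lift_apply_of]

theorem foxDeriv_of (i : α) (g : FreeGroup α) : foxDeriv k i (of k _ g) = (foxCocycle k i g).d :=
  (MonoidAlgebra.basis (FreeGroup α) k).constr_basis k _ g

theorem foxDeriv_of_mul (i : α) (g h : FreeGroup α) :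
    foxDeriv k i (of k _ (g * h)) =
      foxDeriv k i (of k _ g) * of k _ h + foxDeriv k i (of k _ h) := by
  rw [foxDeriv_of, foxDeriv_of, foxDeriv_of, map_mul, RightSemidirect.mul_d, foxCocycle_g]

theorem foxDeriv_one (i : α) : foxDeriv k i 1 = 0 := by
  rw [← map_one (of k (FreeGroup α)), foxDeriv_of, map_one, RightSemidirect.one_d]

theorem foxDeriv_of_inv (i : α) (g : FreeGroup α) :
    foxDeriv k i (of k _ g⁻¹) = -(foxDeriv k i (of k _ g) * of k _ g⁻¹) := by
  have h := foxDeriv_of_mul (k := k) i g g⁻¹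
  rw [mul_inv_cancel, foxDeriv_of, map_one, RightSemidirect.one_d] at h
  exact eq_neg_of_add_eq_zero_right h.symm

theorem foxDeriv_of_of (i j : α) :
    foxDeriv k i (of k _ (FreeGroup.of j)) = if j = i then -of k _ (FreeGroup.of j) else 0 := by
  rw [foxDeriv_of, foxCocycle, FreeGroup.lift_apply_of]

theorem foxDeriv_of_of_inv (i j : α) :
    foxDeriv k i (of k _ (FreeGroup.of j)⁻¹) = if j = i then 1 else 0 := by
  rw [foxDeriv_of_inv, foxDeriv_of_of]
  split_ifs
  · rw [neg_mul, neg_neg, ← map_mul, mul_inv_cancel, map_one]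
  · rw [zero_mul, neg_zero]

theorem foxDeriv_of_inv_sub_one_mul (i j : α) (a : MonoidAlgebra k (FreeGroup α)) :
    foxDeriv k i ((of k _ (FreeGroup.of j)⁻¹ - 1) * a) = if j = i then a else 0 := by
  suffices (foxDeriv k i).comp (LinearMap.mulLeft k (of k _ (FreeGroup.of j)⁻¹ - 1)) =
      if j = i then LinearMap.id else 0 by
    simpa [apply_ite (fun f : MonoidAlgebra k (FreeGroup α) →ₗ[k] _ => f a)] using
      DFunLike.congr_fun this a
  refine (MonoidAlgebra.basis (FreeGroup α) k).ext fun g => ?_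
  simp only [MonoidAlgebra.basis_apply, ← of_apply, LinearMap.comp_apply, LinearMap.mulLeft_apply,
    sub_mul, one_mul, ← map_mul, map_sub, foxDeriv_of_mul, foxDeriv_of_of_inv]
  split_ifs <;> simp

variable [Fintype α]

theorem sum_of_inv_sub_one_mul_foxDeriv_of (g : FreeGroup α) :
    ∑ i, (of k _ (FreeGroup.of i)⁻¹ - 1) * foxDeriv k i (of k _ g) = of k _ g - 1 := by
  induction g using FreeGroup.induction_on with
  | C1 => simp only [map_one, foxDeriv_one, mul_zero, Finset.sum_const_zero, sub_self]
  | of j =>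
    simp only [foxDeriv_of_of, mul_ite, mul_zero, Finset.sum_ite_eq, Finset.mem_univ, if_true]
    rw [mul_neg, sub_mul, ← map_mul, inv_mul_cancel, map_one, one_mul, neg_sub]
  | inv_of j ih =>
    simp only [foxDeriv_of_inv, mul_neg, ← mul_assoc, Finset.sum_neg_distrib, ← Finset.sum_mul, ih]
    rw [sub_mul, one_mul, ← map_mul, mul_inv_cancel, map_one, neg_sub]
  | mul g h hg hh =>
    simp only [foxDeriv_of_mul, mul_add, ← mul_assoc, Finset.sum_add_distrib, ← Finset.sum_mul,
      hg, hh]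
    rw [map_mul, sub_mul, one_mul, sub_add_sub_cancel]

theorem sum_of_inv_sub_one_mul_foxDeriv (x : MonoidAlgebra k (FreeGroup α)) :
    ∑ i, (of k _ (FreeGroup.of i)⁻¹ - 1) * foxDeriv k i x = x - augmentation k _ x • 1 := by
  induction x using MonoidAlgebra.induction_on with
  | of g => rw [sum_of_inv_sub_one_mul_foxDeriv_of, augmentation_of, one_smul]
  | add x y hx hy =>
    simp only [map_add, mul_add, Finset.sum_add_distrib, hx, hy, add_smul]
    abel
  | smul r x hx =>
    simp only [map_smul, mul_smul_comm, ← Finset.smul_sum, hx, smul_sub, smul_smul, smul_eq_mul]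

theorem foxDeriv_sum_of_inv_sub_one_mul (i : α) (a : α → MonoidAlgebra k (FreeGroup α)) :
    foxDeriv k i (∑ j, (of k _ (FreeGroup.of j)⁻¹ - 1) * a j) = a i := by
  simp only [map_sum, foxDeriv_of_inv_sub_one_mul, Finset.sum_ite_eq', Finset.mem_univ, if_true]

end Fox

/-- The augmentation ideal `I(Fₙ) = Ker(𝔱 : ℤ[Fₙ] → ℤ)` is a free right `ℤ[Fₙ]`-module
with basis `{γ₁⁻¹ − 1, …, γₙ⁻¹ − 1}`: the map `(a₁,…,aₙ) ↦ Σᵢ (γᵢ⁻¹ − 1)aᵢ` is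
injective with range exactly the augmentation ideal. -/
theorem augmentation_ideal_free_basis (n : ℕ) :
    Function.Injective
      (fun a : Fin n → MonoidAlgebra ℤ (FreeGroup (Fin n)) =>
        ∑ i : Fin n,
          (MonoidAlgebra.of ℤ (FreeGroup (Fin n)) ((FreeGroup.of i)⁻¹) - 1) * a i) ∧
    Set.range
      (fun a : Fin n → MonoidAlgebra ℤ (FreeGroup (Fin n)) =>
        ∑ i : Fin n,
          (MonoidAlgebra.of ℤ (FreeGroup (Fin n)) ((FreeGroup.of i)⁻¹) - 1) * a i) =
      {x : MonoidAlgebra ℤ (FreeGroup (Fin n)) | (Finsupp.sum x.coeff fun _ a => a) = 0} := by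
  refine ⟨fun a b hab => funext fun i => ?_, Set.ext fun x => ⟨?_, fun hx => ?_⟩⟩
  · simpa only [foxDeriv_sum_of_inv_sub_one_mul] using congrArg (foxDeriv ℤ i) hab
  · rintro ⟨a, rfl⟩
    rw [Set.mem_ofPred_eq, ← augmentation_apply, map_sum]
    exact Finset.sum_eq_zero fun i _ => augmentation_of_sub_one_mul _ _
  · refine ⟨fun i => foxDeriv ℤ i x, ?_⟩
    rw [Set.mem_ofPred_eq, ← augmentation_apply] at hx
    dsimp only
    rw [sum_of_inv_sub_one_mul_foxDeriv, hx, zero_smul, sub_zero]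
end
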